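/- arXiv:1310.5206 — 5 statements merged into one kernel-verified Lean document; each statement's English description precedes it below -/
import Mathlib

section
/- Let σ ∈ ℝ and let K ∈ C¹([0,∞);ℝ) satisfy K(t) ≥ 0 and (d/dt)(e^{σt}K(t)) ≤ 0 for all t ≥ 0. Let Ψ̃ ∈ C([0,∞);ℝ) and suppose Ψ ∈ C([0,∞);ℝ) satisfies the Volterra integral equation Ψ(t) + ∫₀^t Ψ(τ)K(t−τ) dτ = Ψ̃(t) for all t ≥ 0. Then |Ψ(t) − Ψ̃(t)| ≤ K(0) ∫₀^t e^{−σ(t−τ)} |Ψ̃(τ)| dτ for all t ≥ 0. (Lemma 6.2.) -/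
/-!
Multiplying by `exp (σ t)` reduces everything to `σ = 0` with the nonnegative, nonincreasing
kernel `G = exp (σ ·) * K`. With `P` the primitive of the solution `u`, integration by parts gives
`g t - u t = G t * P t + ∫₀ᵗ G' (t - τ) * (P τ - P t) dτ`, so it suffices that `P` oscillates on
`[0, t]` by at most `∫₀ᵗ |g|`. This follows from the one-sided bounds `∫₀ᵀ u ≤ ∫₀ᵀ g⁺` (and the
same for `-u`), proved by a maximum principle: where `P` attains its running maximum, the same
identity gives `u ≤ g - G * P ≤ g⁺`.
-/

open Set Real intervalIntegral Filter Topology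

theorem HasDerivAt.nonneg_of_isMaxOn_Icc {f : ℝ → ℝ} {f' a b : ℝ} (hf : HasDerivAt f f' b)
    (hmax : IsMaxOn f (Icc a b) b) (hab : a < b) : 0 ≤ f' := by
  have hcone : a - b ∈ posTangentConeAt (Icc a b) b :=
    sub_mem_posTangentConeAt_of_segment_subset
      ((convex_Icc a b).segment_subset (right_mem_Icc.2 hab.le) (left_mem_Icc.2 hab.le))
  have := hmax.localize.hasFDerivWithinAt_nonpos hf.hasDerivWithinAt.hasFDerivWithinAt hcone
  simp only [ContinuousLinearMap.toSpanSingleton_apply, smul_eq_mul] at this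
  nlinarith

theorem ContinuousOn.comp_const_sub_uIcc {F : ℝ → ℝ} (hF : ContinuousOn F (Ici 0)) {s : ℝ}
    (hs : 0 ≤ s) : ContinuousOn (fun τ => F (s - τ)) (uIcc 0 s) :=
  hF.comp (continuous_const.sub continuous_id).continuousOn
    fun τ hτ => by rw [uIcc_of_le hs] at hτ; exact sub_nonneg.2 hτ.2

theorem monotoneOn_integral_of_nonneg {f : ℝ → ℝ} (hf : Continuous f) (hf0 : ∀ x, 0 ≤ f x) :
    MonotoneOn (fun a => ∫ x in (0:ℝ)..a, f x) (Ici 0) := fun _ ha b _ hab =>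
  integral_mono_interval le_rfl ha hab (Eventually.of_forall hf0) (hf.intervalIntegrable 0 b)

section Volterra

variable {G G' u g : ℝ → ℝ}

theorem integral_deriv_comp_const_sub (hG : ∀ s, 0 ≤ s → HasDerivAt G (G' s) s)
    (hG' : ContinuousOn G' (Ici 0)) {s : ℝ} (hs : 0 ≤ s) :
    ∫ τ in (0:ℝ)..s, G' (s - τ) = G s - G 0 := by
  rw [integral_comp_sub_left (fun x => G' x) s, sub_self, sub_zero]
  refine integral_eq_sub_of_hasDerivAt (fun x hx => hG x ?_) ?_
  · rw [uIcc_of_le hs] at hx; exact hx.1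
  · exact (hG'.mono fun x hx => by rw [uIcc_of_le hs] at hx; exact hx.1).intervalIntegrable

theorem integral_mul_comp_const_sub (hG : ∀ s, 0 ≤ s → HasDerivAt G (G' s) s)
    (hG' : ContinuousOn G' (Ici 0)) (hu : Continuous u) {s : ℝ} (hs : 0 ≤ s) :
    ∫ τ in (0:ℝ)..s, u τ * G (s - τ) = G s * (∫ x in (0:ℝ)..s, u x) +
      ∫ τ in (0:ℝ)..s, G' (s - τ) * ((∫ x in (0:ℝ)..τ, u x) - ∫ x in (0:ℝ)..s, u x) := by
  have hGs : ∀ τ ∈ uIcc (0:ℝ) s, HasDerivAt (fun τ => G (s - τ)) (-G' (s - τ)) τ := by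
    intro τ hτ
    rw [uIcc_of_le hs] at hτ
    exact (hG (s - τ) (sub_nonneg.2 hτ.2)).comp_const_sub s τ
  have hP : ∀ τ ∈ uIcc (0:ℝ) s,
      HasDerivAt (fun τ => (∫ x in (0:ℝ)..τ, u x) - ∫ x in (0:ℝ)..s, u x) (u τ) τ :=
    fun τ _ => ((hu.integral_hasStrictDerivAt 0 τ).hasDerivAt).sub_const _
  have := integral_mul_deriv_eq_deriv_mul hGs hP (hG'.comp_const_sub_uIcc hs).neg.intervalIntegrable
    (hu.intervalIntegrable 0 s)
  simp only [integral_same, sub_self, sub_zero, zero_sub, mul_zero, mul_neg, neg_mul,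
    intervalIntegral.integral_neg, sub_neg_eq_add, zero_add] at this
  rw [integral_congr fun τ _ => mul_comm (u τ) (G (s - τ)), this]

theorem le_sub_mul_integral_of_isMaxOn (hG : ∀ s, 0 ≤ s → HasDerivAt G (G' s) s)
    (hG' : ContinuousOn G' (Ici 0)) (hG'_nonpos : ∀ s, 0 ≤ s → G' s ≤ 0) (hu : Continuous u)
    {c : ℝ} (hc : 0 ≤ c) (heq : u c + ∫ τ in (0:ℝ)..c, u τ * G (c - τ) = g c)
    (hmax : IsMaxOn (fun x => ∫ τ in (0:ℝ)..x, u τ) (Icc 0 c) c) :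
    u c ≤ g c - G c * ∫ τ in (0:ℝ)..c, u τ := by
  have hrem : 0 ≤ ∫ τ in (0:ℝ)..c, G' (c - τ) * ((∫ x in (0:ℝ)..τ, u x) - ∫ x in (0:ℝ)..c, u x) :=
    integral_nonneg hc fun τ hτ =>
      mul_nonneg_of_nonpos_of_nonpos (hG'_nonpos _ (sub_nonneg.2 hτ.2)) (sub_nonpos.2 (hmax hτ))
  rw [integral_mul_comp_const_sub hG hG' hu hc] at heq
  linarith

/-- At a maximiser `c > 0` of `∫₀ˣ u - ∫₀ˣ g⁺ - ε x` on `[0, T]` the primitive of `u` is maximal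
on `[0, c]`, which forces `u c ≤ g⁺ c` and hence a negative derivative there. -/
theorem integral_le_integral_max_zero_add_mul_of_volterra
    (hG : ∀ s, 0 ≤ s → HasDerivAt G (G' s) s) (hG' : ContinuousOn G' (Ici 0))
    (hG_nonneg : ∀ s, 0 ≤ s → 0 ≤ G s) (hG'_nonpos : ∀ s, 0 ≤ s → G' s ≤ 0)
    (hu : Continuous u) (hg : Continuous g)
    (heq : ∀ s, 0 ≤ s → u s + ∫ τ in (0:ℝ)..s, u τ * G (s - τ) = g s)
    {T ε : ℝ} (hT : 0 ≤ T) (hε : 0 < ε) :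
    ∫ τ in (0:ℝ)..T, u τ ≤ (∫ τ in (0:ℝ)..T, max (g τ) 0) + ε * T := by
  set P : ℝ → ℝ := fun x => ∫ τ in (0:ℝ)..x, u τ
  set Q : ℝ → ℝ := fun x => ∫ τ in (0:ℝ)..x, max (g τ) 0
  set W : ℝ → ℝ := fun x => P x - Q x - ε * x
  have hgp : Continuous fun τ => max (g τ) 0 := hg.max continuous_const
  have hW : ∀ x, HasDerivAt W (u x - max (g x) 0 - ε) x := fun x => by
    simpa using ((hu.integral_hasStrictDerivAt 0 x).hasDerivAt.fun_sub
      (hgp.integral_hasStrictDerivAt 0 x).hasDerivAt).fun_sub ((hasDerivAt_id x).const_mul ε)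
  obtain ⟨c, hc, hmax⟩ := isCompact_Icc.exists_isMaxOn (nonempty_Icc.2 hT)
    (continuous_iff_continuousAt.2 fun x => (hW x).continuousAt).continuousOn
  obtain rfl | hc_pos := hc.1.eq_or_lt
  · have := hmax (right_mem_Icc.2 hT)
    simp only [W, P, Q, mem_ofPred_eq, integral_same, mul_zero, sub_zero] at this
    linarith
  have hQ_mono : ∀ τ ∈ Icc 0 c, Q τ ≤ Q c := fun τ hτ =>
    monotoneOn_integral_of_nonneg hgp (fun x => le_max_right _ _) hτ.1 hc.1 hτ.2
  have hP_max : IsMaxOn P (Icc 0 c) c := fun τ hτ => by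
    have hWτ : W τ ≤ W c := hmax ⟨hτ.1, hτ.2.trans hc.2⟩
    have := hQ_mono τ hτ
    have : ε * τ ≤ ε * c := mul_le_mul_of_nonneg_left hτ.2 hε.le
    show P τ ≤ P c
    linarith
  have hP_nonneg : 0 ≤ P c := by
    have hW0 : W 0 ≤ W c := hmax (left_mem_Icc.2 hT)
    have : 0 ≤ Q c := integral_nonneg hc.1 fun x _ => le_max_right _ _
    have : 0 ≤ ε * c := mul_nonneg hε.le hc.1
    simp only [W, P, Q, integral_same, mul_zero, sub_zero] at hW0
    linarith
  have hu_le : u c ≤ max (g c) 0 :=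
    calc u c ≤ g c - G c * P c := le_sub_mul_integral_of_isMaxOn hG hG' hG'_nonpos hu hc.1
          (heq c hc.1) hP_max
      _ ≤ g c := sub_le_self _ (mul_nonneg (hG_nonneg c hc.1) hP_nonneg)
      _ ≤ max (g c) 0 := le_max_left _ _
  have := (hW c).nonneg_of_isMaxOn_Icc (hmax.on_subset (Icc_subset_Icc_right hc.2)) hc_pos
  linarith

theorem integral_le_integral_max_zero_of_volterra
    (hG : ∀ s, 0 ≤ s → HasDerivAt G (G' s) s) (hG' : ContinuousOn G' (Ici 0))
    (hG_nonneg : ∀ s, 0 ≤ s → 0 ≤ G s) (hG'_nonpos : ∀ s, 0 ≤ s → G' s ≤ 0)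
    (hu : Continuous u) (hg : Continuous g)
    (heq : ∀ s, 0 ≤ s → u s + ∫ τ in (0:ℝ)..s, u τ * G (s - τ) = g s) {T : ℝ} (hT : 0 ≤ T) :
    ∫ τ in (0:ℝ)..T, u τ ≤ ∫ τ in (0:ℝ)..T, max (g τ) 0 := by
  have hlim : Tendsto (fun ε => (∫ τ in (0:ℝ)..T, max (g τ) 0) + ε * T) (𝓝[>] 0)
      (𝓝 ((∫ τ in (0:ℝ)..T, max (g τ) 0) + 0 * T)) :=
    ((continuous_const.add (continuous_id.mul continuous_const)).tendsto 0).mono_left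
      nhdsWithin_le_nhds
  rw [zero_mul, add_zero] at hlim
  exact ge_of_tendsto hlim (eventually_nhdsWithin_of_forall fun ε hε =>
    integral_le_integral_max_zero_add_mul_of_volterra hG hG' hG_nonneg hG'_nonpos hu hg heq hT hε)

theorem abs_integral_sub_integral_le_of_volterra
    (hG : ∀ s, 0 ≤ s → HasDerivAt G (G' s) s) (hG' : ContinuousOn G' (Ici 0))
    (hG_nonneg : ∀ s, 0 ≤ s → 0 ≤ G s) (hG'_nonpos : ∀ s, 0 ≤ s → G' s ≤ 0)
    (hu : Continuous u) (hg : Continuous g)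
    (heq : ∀ s, 0 ≤ s → u s + ∫ τ in (0:ℝ)..s, u τ * G (s - τ) = g s) {τ t : ℝ}
    (hτ : τ ∈ Icc 0 t) :
    |(∫ x in (0:ℝ)..τ, u x) - ∫ x in (0:ℝ)..t, u x| ≤ ∫ x in (0:ℝ)..t, |g x| := by
  have hneg : ∀ s, 0 ≤ s → -u s + ∫ τ in (0:ℝ)..s, -u τ * G (s - τ) = -g s := fun s hs => by
    simp only [neg_mul, intervalIntegral.integral_neg]
    linarith [heq s hs]
  have hgp : Continuous fun x => max (g x) 0 := hg.max continuous_const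
  have hgm : Continuous fun x => max (-g x) 0 := hg.neg.max continuous_const
  have hup := fun s (hs : 0 ≤ s) =>
    integral_le_integral_max_zero_of_volterra hG hG' hG_nonneg hG'_nonpos hu hg heq hs
  have hlo : ∀ s, 0 ≤ s → -∫ x in (0:ℝ)..s, u x ≤ ∫ x in (0:ℝ)..s, max (-g x) 0 := fun s hs => by
    simpa only [intervalIntegral.integral_neg] using integral_le_integral_max_zero_of_volterra
      (u := fun x => -u x) (g := fun x => -g x) hG hG' hG_nonneg hG'_nonpos hu.neg hg.neg hneg hs
  have hsplit : (∫ x in (0:ℝ)..t, max (g x) 0) + ∫ x in (0:ℝ)..t, max (-g x) 0 =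
      ∫ x in (0:ℝ)..t, |g x| := by
    rw [← integral_add (hgp.intervalIntegrable 0 t) (hgm.intervalIntegrable 0 t)]
    exact integral_congr fun x _ => max_zero_add_max_neg_zero_eq_abs_self (g x)
  have ht : 0 ≤ t := hτ.1.trans hτ.2
  have hgp_mono := monotoneOn_integral_of_nonneg hgp (fun x => le_max_right _ _) hτ.1 ht hτ.2
  have hgm_mono := monotoneOn_integral_of_nonneg hgm (fun x => le_max_right _ _) hτ.1 ht hτ.2
  rw [abs_sub_le_iff]
  constructor <;> linarith [hup τ hτ.1, hlo τ hτ.1, hup t ht, hlo t ht]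

theorem abs_sub_le_of_volterra
    (hG : ∀ s, 0 ≤ s → HasDerivAt G (G' s) s) (hG' : ContinuousOn G' (Ici 0))
    (hG_nonneg : ∀ s, 0 ≤ s → 0 ≤ G s) (hG'_nonpos : ∀ s, 0 ≤ s → G' s ≤ 0)
    (hu : Continuous u) (hg : Continuous g)
    (heq : ∀ s, 0 ≤ s → u s + ∫ τ in (0:ℝ)..s, u τ * G (s - τ) = g s) {t : ℝ} (ht : 0 ≤ t) :
    |g t - u t| ≤ G 0 * ∫ τ in (0:ℝ)..t, |g τ| := by
  set P : ℝ → ℝ := fun x => ∫ τ in (0:ℝ)..x, u τ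
  set m := ∫ τ in (0:ℝ)..t, |g τ|
  have hosc : ∀ τ ∈ Icc 0 t, |P τ - P t| ≤ m := fun τ hτ =>
    abs_integral_sub_integral_le_of_volterra hG hG' hG_nonneg hG'_nonpos hu hg heq hτ
  have hPt : |P t| ≤ m := by simpa [P] using hosc 0 (left_mem_Icc.2 ht)
  have hG't := hG'.comp_const_sub_uIcc ht
  have hPcont : Continuous P := continuous_iff_continuousAt.2 fun x =>
    (hu.integral_hasStrictDerivAt 0 x).hasDerivAt.continuousAt
  rw [← heq t ht, add_sub_cancel_left, integral_mul_comp_const_sub hG hG' hu ht]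
  calc |G t * P t + ∫ τ in (0:ℝ)..t, G' (t - τ) * (P τ - P t)|
      ≤ |G t * P t| + |∫ τ in (0:ℝ)..t, G' (t - τ) * (P τ - P t)| := abs_add_le _ _
    _ ≤ G t * m + ∫ τ in (0:ℝ)..t, -G' (t - τ) * m := by
      gcongr
      · rw [abs_mul, abs_of_nonneg (hG_nonneg t ht)]
        exact mul_le_mul_of_nonneg_left hPt (hG_nonneg t ht)
      · refine (abs_integral_le_integral_abs ht).trans (integral_mono_on ht ?_ ?_ fun τ hτ => ?_)
        · exact (hG't.mul (hPcont.sub continuous_const).continuousOn).abs.intervalIntegrable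
        · exact (hG't.neg.mul continuousOn_const).intervalIntegrable
        · rw [abs_mul, abs_of_nonpos (hG'_nonpos _ (sub_nonneg.2 hτ.2))]
          exact mul_le_mul_of_nonneg_left (hosc τ hτ)
            (neg_nonneg.2 (hG'_nonpos _ (sub_nonneg.2 hτ.2)))
    _ = G 0 * m := by
      rw [intervalIntegral.integral_mul_const, intervalIntegral.integral_neg,
        integral_deriv_comp_const_sub hG hG' ht]
      ring

theorem abs_sub_le_of_volterra_of_continuousOn
    (hG : ∀ s, 0 ≤ s → HasDerivAt G (G' s) s) (hG' : ContinuousOn G' (Ici 0))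
    (hG_nonneg : ∀ s, 0 ≤ s → 0 ≤ G s) (hG'_nonpos : ∀ s, 0 ≤ s → G' s ≤ 0)
    (hu : ContinuousOn u (Ici 0)) (hg : ContinuousOn g (Ici 0))
    (heq : ∀ s, 0 ≤ s → u s + ∫ τ in (0:ℝ)..s, u τ * G (s - τ) = g s) {t : ℝ} (ht : 0 ≤ t) :
    |g t - u t| ≤ G 0 * ∫ τ in (0:ℝ)..t, |g τ| := by
  have hmax_eq : ∀ {s τ : ℝ}, 0 ≤ s → τ ∈ uIcc 0 s → max τ 0 = τ := fun hs hτ =>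
    max_eq_left (by rw [uIcc_of_le hs] at hτ; exact hτ.1)
  have key := abs_sub_le_of_volterra (u := fun τ => u (max τ 0)) (g := fun τ => g (max τ 0))
    hG hG' hG_nonneg hG'_nonpos
    (hu.comp_continuous (continuous_id.max continuous_const) fun τ => le_max_right τ 0)
    (hg.comp_continuous (continuous_id.max continuous_const) fun τ => le_max_right τ 0)
    (fun s hs => by
      rw [integral_congr (g := fun τ => u τ * G (s - τ)) fun τ hτ => by simp only [hmax_eq hs hτ],
        max_eq_left hs]
      exact heq s hs) ht
  rwa [integral_congr (g := fun τ => |g τ|) fun τ hτ => by simp only [hmax_eq ht hτ],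
    max_eq_left ht] at key

end Volterra

theorem hasDerivAt_exp_const_mul_mul {K : ℝ → ℝ} {k s : ℝ} (σ : ℝ) (hK : HasDerivAt K k s) :
    HasDerivAt (fun s => exp (σ * s) * K s) (exp (σ * s) * (σ * K s + k)) s :=
  ((((hasDerivAt_id' s).const_mul σ).exp).fun_mul hK).congr_deriv (by ring)

theorem integral_exp_mul_mul_exp_mul_comp_sub (σ s : ℝ) (f k : ℝ → ℝ) :
    ∫ τ in (0:ℝ)..s, (exp (σ * τ) * f τ) * (exp (σ * (s - τ)) * k (s - τ)) =
      exp (σ * s) * ∫ τ in (0:ℝ)..s, f τ * k (s - τ) := by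
  rw [← intervalIntegral.integral_const_mul]
  refine integral_congr fun τ _ => ?_
  have : exp (σ * s) = exp (σ * τ) * exp (σ * (s - τ)) := by rw [← exp_add]; ring_nf
  rw [this]
  ring

theorem integral_abs_exp_mul (σ t : ℝ) (f : ℝ → ℝ) :
    ∫ τ in (0:ℝ)..t, |exp (σ * τ) * f τ| =
      exp (σ * t) * ∫ τ in (0:ℝ)..t, exp (-σ * (t - τ)) * |f τ| := by
  rw [← intervalIntegral.integral_const_mul]
  refine integral_congr fun τ _ => ?_
  rw [abs_mul, abs_exp, ← mul_assoc, ← exp_add]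
  ring_nf

/-- Lemma 6.2: if `K ∈ C¹([0,∞))` with `K ≥ 0` and `(d/dt)(e^{σt}K(t)) ≤ 0`, and `Ψ`
solves the Volterra equation `Ψ(t) + ∫₀^t Ψ(τ)K(t−τ)dτ = Ψ̃(t)`, then
`|Ψ(t) − Ψ̃(t)| ≤ K(0) ∫₀^t e^{−σ(t−τ)} |Ψ̃(τ)| dτ`. -/
theorem stmt_13
    (σ : ℝ) (K K' : ℝ → ℝ)
    (hK' : ∀ t : ℝ, 0 ≤ t → HasDerivAt K (K' t) t)
    (hK'cont : ContinuousOn K' (Ici 0))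
    (hKnonneg : ∀ t : ℝ, 0 ≤ t → 0 ≤ K t)
    (hKdec : ∀ t : ℝ, 0 ≤ t → deriv (fun s => Real.exp (σ * s) * K s) t ≤ 0)
    (Ψ Ψt : ℝ → ℝ)
    (hΨcont : ContinuousOn Ψ (Ici 0)) (hΨtcont : ContinuousOn Ψt (Ici 0))
    (hVolterra : ∀ t : ℝ, 0 ≤ t → Ψ t + (∫ τ in (0:ℝ)..t, Ψ τ * K (t - τ)) = Ψt t) :
    ∀ t : ℝ, 0 ≤ t →
      |Ψ t - Ψt t| ≤ K 0 * ∫ τ in (0:ℝ)..t, Real.exp (-σ * (t - τ)) * |Ψt τ| := by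
  intro t ht
  have hG : ∀ s, 0 ≤ s →
      HasDerivAt (fun s => exp (σ * s) * K s) (exp (σ * s) * (σ * K s + K' s)) s :=
    fun s hs => hasDerivAt_exp_const_mul_mul σ (hK' s hs)
  have hKcont : ContinuousOn K (Ici 0) := fun s hs => (hK' s hs).continuousAt.continuousWithinAt
  have hexp : Continuous fun s : ℝ => exp (σ * s) := by fun_prop
  have key := abs_sub_le_of_volterra_of_continuousOn (u := fun s => exp (σ * s) * Ψ s)
    (g := fun s => exp (σ * s) * Ψt s) hG
    (hexp.continuousOn.mul ((continuousOn_const.mul hKcont).add hK'cont))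
    (fun s hs => mul_nonneg (exp_pos _).le (hKnonneg s hs))
    (fun s hs => (hG s hs).deriv ▸ hKdec s hs)
    (hexp.continuousOn.mul hΨcont) (hexp.continuousOn.mul hΨtcont)
    (fun s hs => by
      rw [integral_exp_mul_mul_exp_mul_comp_sub, ← hVolterra s hs]
      ring) ht
  rw [integral_abs_exp_mul, ← mul_sub, abs_mul, abs_exp, abs_sub_comm, mul_zero, exp_zero,
    one_mul, mul_left_comm] at key
  exact le_of_mul_le_mul_left key (exp_pos _)
end

section
/- Assume k_B > k_D ≥ 2k_Q > 0, k_B > k_P, and k_B k_Q ≤ k_D k_P. Let c_s : [0,R_s] → (0,1] be continuous and nondecreasing, and let p_s ∈ C¹([0,R_s];ℝ) satisfy p_s'(r) ≥ 0 on [0,R_s] and p_s(0) = α(c_s(0)). Then for every r ∈ [0,R_s]: f_p(c_s(r),p_s(r)) + g(c_s(r),p_s(r)) + ∫₀^r K_M(c_s(ρ)) p_s'(ρ) dρ < 0, where f_p(c,p) = K_M(c) − K_N(c) − 2K_M(c)p. (This is inequality (4.29), the key step in the proof of Lemma 4.6.) -/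
open Set Real intervalIntegral

lemma root_gt (M0 D0 P0 u v : ℝ) (hM0 : 0 < M0) (hv : 0 < v)
    (h : M0 * u ^ 2 - D0 * (u * v) - P0 * v ^ 2 < 0) :
    u < v * ((D0 + Real.sqrt (D0 ^ 2 + 4 * M0 * P0)) / (2 * M0)) := by
  have key : (2 * M0 * u - D0 * v) ^ 2 < v ^ 2 * (D0 ^ 2 + 4 * M0 * P0) := by nlinarith
  have hDP : 0 ≤ D0 ^ 2 + 4 * M0 * P0 := by
    nlinarith [sq_nonneg (2 * M0 * u - D0 * v), sq_nonneg v]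
  set S := Real.sqrt (D0 ^ 2 + 4 * M0 * P0) with hSdef
  have hSnn : 0 ≤ S := Real.sqrt_nonneg _
  have hS2 : S ^ 2 = D0 ^ 2 + 4 * M0 * P0 := Real.sq_sqrt hDP
  have h2 : 2 * M0 * u - D0 * v < v * S := by
    nlinarith [mul_nonneg hv.le hSnn, sq_nonneg (2 * M0 * u - D0 * v + v * S)]
  rw [mul_div_assoc', lt_div_iff₀ (by linarith : (0:ℝ) < 2 * M0)]
  nlinarith

lemma key_ineq (kB kD kP kQ c0 c : ℝ)
    (h1 : kB > kD) (h2 : kD ≥ 2 * kQ) (h3 : 0 < kQ) (h4 : kB > kP) (h5 : kB * kQ ≤ kD * kP)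
    (hc0 : 0 < c0) (hcc : c0 ≤ c) (hc1 : c ≤ 1) :
    kB * c - (kP * c + kQ * (1 - c)) <
      (kB * c + kD * (1 - c)) *
        ((kB * c0 + kD * (1 - c0) - (kP * c0 + kQ * (1 - c0)) +
            Real.sqrt ((kB * c0 + kD * (1 - c0) - (kP * c0 + kQ * (1 - c0))) ^ 2 +
              4 * (kB * c0 + kD * (1 - c0)) * (kP * c0))) /
          (2 * (kB * c0 + kD * (1 - c0)))) := by
  have hkD : 0 < kD := by linarith
  have hkB : 0 < kB := by linarith
  have hkP : 0 < kP := by nlinarith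
  have hc01 : c0 ≤ 1 := le_trans hcc hc1
  set M0 : ℝ := kB * c0 + kD * (1 - c0) with hM0def
  set N0 : ℝ := kP * c0 + kQ * (1 - c0) with hN0def
  set A : ℝ := (M0 - N0 + Real.sqrt ((M0 - N0) ^ 2 + 4 * M0 * (kP * c0))) / (2 * M0) with hAdef
  have hM0 : 0 < M0 := by rw [hM0def]; nlinarith
  have hG1 : kB - kP < kB * A :=
    root_gt M0 (M0 - N0) (kP * c0) (kB - kP) kB hM0 hkB (by
      rw [hM0def, hN0def]
      nlinarith [mul_nonneg (mul_nonneg (by linarith : (0:ℝ) ≤ kB - kP)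
        (by linarith : (0:ℝ) ≤ 1 - c0)) (by linarith : (0:ℝ) ≤ kD * kP - kB * kQ),
        mul_pos (mul_pos hkP hc0) (mul_pos hkB hkB)])
  have hG0 : kB * c0 - N0 < M0 * A := by
    rcases le_or_gt (kB * c0 - N0) 0 with hb | hb
    · have hApos : (0:ℝ) < 1 * A :=
        root_gt M0 (M0 - N0) (kP * c0) 0 1 hM0 one_pos (by nlinarith [mul_pos hkP hc0])
      nlinarith
    · have := root_gt M0 (M0 - N0) (kP * c0) (kB * c0 - N0) M0 hM0 hM0 (by
        rw [hN0def] at hb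
        rw [hM0def, hN0def]
        nlinarith [mul_pos (mul_pos hkP hc0) (by nlinarith : (0:ℝ) < kB * c0 + kD * (1 - c0)),
          mul_nonneg (mul_nonneg hkD.le (by linarith : (0:ℝ) ≤ 1 - c0)) hb.le])
      nlinarith
  rcases le_or_gt 0 ((kB - kD) * A - (kB - kP + kQ)) with hs | hs
  · have h7 : 0 ≤ (c - c0) * ((kB - kD) * A - (kB - kP + kQ)) :=
      mul_nonneg (by linarith) hs
    rw [hM0def, hN0def] at hG0
    linarith [hG0, h7]
  · have h7 : 0 ≤ (1 - c) * (-((kB - kD) * A - (kB - kP + kQ))) :=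
      mul_nonneg (by linarith) (by linarith)
    linarith [hG1, h7]


/-- Inequality (4.29) from the proof of Lemma 4.6: under the conditions (1.25), for a
nondecreasing `c_s : [0,R_s] → (0,1]` and `p_s ∈ C¹` with `p_s' ≥ 0`, `p_s(0) = α(c_s(0))`,
one has `f_p(c_s,p_s) + g(c_s,p_s) + ∫₀^r K_M(c_s)p_s' < 0` on `[0,R_s]`. -/
theorem stmt_14
    (Rs : ℝ) (hRs : 0 < Rs)
    (kB kD kP kQ : ℝ)
    (h1 : kB > kD) (h2 : kD ≥ 2 * kQ) (h3 : 0 < kQ) (h4 : kB > kP) (h5 : kB * kQ ≤ kD * kP)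
    (KB KD KP KQ KM KN : ℝ → ℝ) (α : ℝ → ℝ) (f g fp : ℝ → ℝ → ℝ)
    (hKB : KB = fun c => kB * c) (hKD : KD = fun c => kD * (1 - c))
    (hKP : KP = fun c => kP * c) (hKQ : KQ = fun c => kQ * (1 - c))
    (hKM : KM = fun c => KB c + KD c) (hKN : KN = fun c => KP c + KQ c)
    (hα : α = fun c =>
      (KM c - KN c + Real.sqrt ((KM c - KN c) ^ 2 + 4 * KM c * KP c)) / (2 * KM c))
    (hf : f = fun c p => KP c + (KM c - KN c) * p - KM c * p ^ 2)
    (hg : g = fun c p => KM c * p - KD c)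
    (hfp : fp = fun c p => KM c - KN c - 2 * KM c * p)
    (cs : ℝ → ℝ) (hcscont : ContinuousOn cs (Icc 0 Rs))
    (hcsmono : MonotoneOn cs (Icc 0 Rs))
    (hcsrange : ∀ r ∈ Icc (0:ℝ) Rs, cs r ∈ Ioc (0:ℝ) 1)
    (ps ps' : ℝ → ℝ)
    (hps : ∀ r ∈ Icc (0:ℝ) Rs, HasDerivAt ps (ps' r) r)
    (hps'cont : ContinuousOn ps' (Icc 0 Rs))
    (hps'nonneg : ∀ r ∈ Icc (0:ℝ) Rs, 0 ≤ ps' r)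
    (hps0 : ps 0 = α (cs 0)) :
    ∀ r ∈ Icc (0:ℝ) Rs,
      fp (cs r) (ps r) + g (cs r) (ps r) + (∫ ρ in (0:ℝ)..r, KM (cs ρ) * ps' ρ) < 0 := by
  intro r hr
  obtain ⟨hr0, hrR⟩ := hr
  have h0mem : (0:ℝ) ∈ Icc (0:ℝ) Rs := ⟨le_refl 0, hRs.le⟩
  have hrmem : r ∈ Icc (0:ℝ) Rs := ⟨hr0, hrR⟩
  have hrange0 := hcsrange 0 h0mem
  have hranger := hcsrange r hrmem
  simp only [hfp, hg, hKM, hKN, hKB, hKD, hKP, hKQ]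
  simp only [hα, hKM, hKN, hKB, hKD, hKP, hKQ] at hps0
  -- key algebraic inequality
  have hkey := key_ineq kB kD kP kQ (cs 0) (cs r) h1 h2 h3 h4 h5 hrange0.1
    (hcsmono h0mem hrmem hr0) hranger.2
  rw [← hps0] at hkey
  -- integral estimates
  have hsub : Icc (0:ℝ) r ⊆ Icc 0 Rs := Icc_subset_Icc le_rfl hrR
  have huIcc : uIcc (0:ℝ) r = Icc 0 r := uIcc_of_le hr0
  have hcsr : ContinuousOn cs (Icc 0 r) := hcscont.mono hsub
  have hps'r : ContinuousOn ps' (Icc 0 r) := hps'cont.mono hsub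
  have hcont1 : ContinuousOn (fun ρ => (kB * cs ρ + kD * (1 - cs ρ)) * ps' ρ) (Icc 0 r) :=
    ((continuousOn_const.mul hcsr).add
      (continuousOn_const.mul (continuousOn_const.sub hcsr))).mul hps'r
  have hint1 : IntervalIntegrable (fun ρ => (kB * cs ρ + kD * (1 - cs ρ)) * ps' ρ)
      MeasureTheory.volume 0 r := (huIcc ▸ hcont1).intervalIntegrable
  have hint2 : IntervalIntegrable (fun ρ => (kB * cs r + kD * (1 - cs r)) * ps' ρ)
      MeasureTheory.volume 0 r :=
    (continuousOn_const.mul (huIcc ▸ hps'r)).intervalIntegrable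
  have hint3 : IntervalIntegrable ps' MeasureTheory.volume 0 r :=
    (huIcc ▸ hps'r).intervalIntegrable
  have hI1 : (∫ ρ in (0:ℝ)..r, (kB * cs ρ + kD * (1 - cs ρ)) * ps' ρ) ≤
      ∫ ρ in (0:ℝ)..r, (kB * cs r + kD * (1 - cs r)) * ps' ρ := by
    apply intervalIntegral.integral_mono_on hr0 hint1 hint2
    intro ρ hρ
    have h6 := hcsmono (hsub hρ) hrmem hρ.2
    have h7 := hps'nonneg ρ (hsub hρ)
    nlinarith [mul_nonneg (mul_nonneg (by linarith : (0:ℝ) ≤ kB - kD)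
      (by linarith : (0:ℝ) ≤ cs r - cs ρ)) h7]
  have hI2 : (∫ ρ in (0:ℝ)..r, (kB * cs r + kD * (1 - cs r)) * ps' ρ) =
      (kB * cs r + kD * (1 - cs r)) * (ps r - ps 0) := by
    rw [intervalIntegral.integral_const_mul]
    congr 1
    exact intervalIntegral.integral_eq_sub_of_hasDerivAt
      (fun ρ hρ => hps ρ (hsub (huIcc ▸ hρ))) hint3
  linarith [hkey, hI1, hI2.le, hI2.ge]
end

section
/- For every c ∈ (0,1], p ∈ (0,1] with f(c,p) ≤ 0, and every real α ≥ 1: f_p(c,p) + (1/α) g(c,p) < 0, where f_p(c,p) = K_M(c) − K_N(c) − 2K_M(c)p. (This is the claim μ_α* < 0 established at the end of Section 5: at the stationary solution, max_{0≤r≤R_s}(f_p*(r) + g*(r)/α) < 0 for all α ≥ 1.) -/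
open Set Real

/-- The claim `μ_α* < 0` from the end of Section 5: for `c, p ∈ (0,1]` with
`f(c,p) ≤ 0` and any `α ≥ 1`, one has `f_p(c,p) + g(c,p)/α < 0`. -/
theorem stmt_15
    (kB kD kP kQ : ℝ) (hkB : 0 < kB) (hkD : 0 < kD) (hkP : 0 < kP) (hkQ : 0 < kQ)
    (KB KD KP KQ KM KN : ℝ → ℝ) (f g fp : ℝ → ℝ → ℝ)
    (hKB : KB = fun c => kB * c) (hKD : KD = fun c => kD * (1 - c))
    (hKP : KP = fun c => kP * c) (hKQ : KQ = fun c => kQ * (1 - c))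
    (hKM : KM = fun c => KB c + KD c) (hKN : KN = fun c => KP c + KQ c)
    (hf : f = fun c p => KP c + (KM c - KN c) * p - KM c * p ^ 2)
    (hg : g = fun c p => KM c * p - KD c)
    (hfp : fp = fun c p => KM c - KN c - 2 * KM c * p) :
    ∀ c ∈ Ioc (0:ℝ) 1, ∀ p ∈ Ioc (0:ℝ) 1, f c p ≤ 0 →
      ∀ α : ℝ, 1 ≤ α → fp c p + (1 / α) * g c p < 0 := by
  subst hKM hKN hf hg hfp hKB hKD hKP hKQ
  rintro c ⟨hc0, hc1⟩ p ⟨hp0, hp1⟩ hfle α hα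
  simp only at hfle ⊢
  have hα0 : (0:ℝ) < α := lt_of_lt_of_le one_pos hα
  have hinv : 1 / α ≤ 1 := by
    rw [div_le_one hα0]; exact hα
  have hinv0 : 0 < 1 / α := by positivity
  have hKMp : 0 < kB * c + kD * (1 - c) := by nlinarith
  have hfp_neg : kB * c + kD * (1 - c) - (kP * c + kQ * (1 - c))
      - 2 * (kB * c + kD * (1 - c)) * p < 0 := by
    nlinarith [mul_pos hkP hc0, mul_pos hKMp (mul_pos hp0 hp0)]
  rcases le_or_gt ((kB * c + kD * (1 - c)) * p - kD * (1 - c)) 0 with hgle | hgpos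
  · nlinarith [mul_nonpos_of_nonneg_of_nonpos (le_of_lt hinv0) hgle]
  · have hsum : (kB * c + kD * (1 - c) - (kP * c + kQ * (1 - c))
        - 2 * (kB * c + kD * (1 - c)) * p)
        + ((kB * c + kD * (1 - c)) * p - kD * (1 - c)) < 0 := by
      nlinarith [mul_pos hkP hc0, mul_nonneg (le_of_lt hkD) (sub_nonneg.2 hc1)]
    nlinarith [mul_le_of_le_one_left (le_of_lt hgpos) hinv]
end

section
/- Assume c_s, p_s ∈ C¹([0,R_s];ℝ) with c_s(R_s) = 1, p_s(R_s) = 1 and c_s'(R_s) > 0, and assume v_s ∈ C¹([0,R_s];ℝ) satisfies v_s(R_s) = 0 and v_s'(r) + ((n−1)/r)v_s(r) = g(c_s(r),p_s(r)) for 0 < r ≤ R_s. Define g*(r) = g(c_s(r),p_s(r)), g_p*(r) = K_M(c_s(r)), g_c*(r) = K_M'(c_s(r))p_s(r) − K_D'(c_s(r)), u₁(r) = R_s c_s'(r)/(r c_s'(R_s)), and v₁(r) = g_p*(r)p_s'(r) + c_s'(R_s)R_s^{−1} g_c*(r) r u₁(r). Then v₁(r) = (d/dr)g*(r) on (0,R_s],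 and consequently α̃₁(γ) := (1 − λ₁/(n−1))·(γ/R_s³) + g(1,1) − R_s^{−n} ∫₀^{R_s} ρ^n v₁(ρ) dρ = 0 for every γ, where λ₁ = n−1. (This is the identity α̃₁(γ) = 0 in (2.30), which expresses the translation invariance of the linearized problem in the mode k = 1.) -/
/-!
Since `r u₁(r) = R_s c_s'(r) / c_s'(R_s)`, `v₁` is the chain-rule expression
`K_M(c_s) p_s' + (K_M'(c_s) p_s − K_D'(c_s)) c_s'` for `(g*)'`. The ODE for `v_s` says
`(ρ^{n-1} v_s)' = ρ^{n-1} g*`, so `ρ^n g* − n ρ^{n-1} v_s` is a primitive of `ρ^n (g*)'`.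
Its values at `0` and `R_s` give `∫₀^{R_s} ρ^n v₁ = R_s^n g(1,1)`, and `λ₁ = n − 1` kills the `γ` term.
-/

open Set Real intervalIntegral

theorem HasDerivAt.mul_sub_comp {KM KD c p : ℝ → ℝ} {KM' KD' c' p' r : ℝ}
    (hKM : HasDerivAt KM KM' (c r)) (hKD : HasDerivAt KD KD' (c r))
    (hc : HasDerivAt c c' r) (hp : HasDerivAt p p' r) :
    HasDerivAt (fun x => KM (c x) * p x - KD (c x)) (KM (c r) * p' + (KM' * p r - KD') * c') r :=
  (((hKM.comp r hc).mul hp).sub (hKD.comp r hc)).congr_deriv (by rw [Function.comp_apply]; ring)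

theorem hasDerivAt_pow_mul_sub_of_radial_ode {n : ℕ} {G V : ℝ → ℝ} {G' V' ρ : ℝ} (hρ : ρ ≠ 0)
    (hG : HasDerivAt G G' ρ) (hV : HasDerivAt V V' ρ)
    (hode : V' + ((n - 1 : ℝ) / ρ) * V ρ = G ρ) :
    HasDerivAt (fun x => x ^ n * G x - n * x ^ (n - 1) * V x) (ρ ^ n * G') ρ := by
  have hV' : V' = G ρ - ((n - 1 : ℝ) / ρ) * V ρ := by linarith
  refine (((hasDerivAt_pow n ρ).mul hG).sub
    (((hasDerivAt_pow (n - 1) ρ).const_mul (n : ℝ)).mul hV)).congr_deriv ?_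
  rw [hV']
  rcases n with _ | _ | m
  · simp
  · simp
  · simp only [Nat.add_sub_cancel, Nat.cast_add, Nat.cast_one, pow_succ]
    field_simp
    ring

theorem integral_pow_mul_deriv_of_radial_ode {n : ℕ} (hn : 2 ≤ n) {R : ℝ} (hR : 0 ≤ R)
    {G G' V V' : ℝ → ℝ} (hGc : ContinuousOn G (Icc 0 R)) (hVc : ContinuousOn V (Icc 0 R))
    (hG : ∀ ρ ∈ Ioo 0 R, HasDerivAt G (G' ρ) ρ) (hV : ∀ ρ ∈ Ioo 0 R, HasDerivAt V (V' ρ) ρ)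
    (hode : ∀ ρ ∈ Ioo 0 R, V' ρ + ((n - 1 : ℝ) / ρ) * V ρ = G ρ)
    (hint : IntervalIntegrable (fun ρ => ρ ^ n * G' ρ) MeasureTheory.volume 0 R) :
    ∫ ρ in 0..R, ρ ^ n * G' ρ = R ^ n * G R - n * R ^ (n - 1) * V R := by
  rw [integral_eq_sub_of_hasDerivAt_of_le hR (by fun_prop)
    (fun ρ hρ => hasDerivAt_pow_mul_sub_of_radial_ode hρ.1.ne' (hG ρ hρ) (hV ρ hρ) (hode ρ hρ)) hint]
  simp [zero_pow (by omega : n ≠ 0), zero_pow (by omega : n - 1 ≠ 0)]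

theorem stmt_18_general
    (n : ℕ) (hn : 2 ≤ n) (Rs : ℝ) (hRs : 0 < Rs)
    (kB kD : ℝ)
    (KB KD KM : ℝ → ℝ) (g : ℝ → ℝ → ℝ)
    (hKB : KB = fun c => kB * c) (hKD : KD = fun c => kD * (1 - c))
    (hKM : KM = fun c => KB c + KD c)
    (hg : g = fun c p => KM c * p - KD c)
    (cs cs' ps ps' vs vs' : ℝ → ℝ)
    (hcs : ∀ r ∈ Icc (0:ℝ) Rs, HasDerivAt cs (cs' r) r)
    (hcs'cont : ContinuousOn cs' (Icc 0 Rs))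
    (hps : ∀ r ∈ Icc (0:ℝ) Rs, HasDerivAt ps (ps' r) r)
    (hps'cont : ContinuousOn ps' (Icc 0 Rs))
    (hvs : ∀ r ∈ Icc (0:ℝ) Rs, HasDerivAt vs (vs' r) r)
    (hcsRs : cs Rs = 1) (hpsRs : ps Rs = 1) (hcs'Rs : 0 < cs' Rs) (hvsRs : vs Rs = 0)
    (hvsode : ∀ r ∈ Ioc (0:ℝ) Rs, vs' r + ((n - 1 : ℝ) / r) * vs r = g (cs r) (ps r))
    (gstar gpstar gcstar u₁ v₁ : ℝ → ℝ)
    (hgstar : gstar = fun r => g (cs r) (ps r))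
    (hgpstar : gpstar = fun r => KM (cs r))
    (hgcstar : gcstar = fun r => (kB - kD) * ps r - (-kD))
    (hu₁ : u₁ = fun r => Rs * cs' r / (r * cs' Rs))
    (hv₁ : v₁ = fun r => gpstar r * ps' r + cs' Rs * Rs⁻¹ * gcstar r * r * u₁ r) :
    (∀ r ∈ Ioc (0:ℝ) Rs, HasDerivAt gstar (v₁ r) r) ∧
    (∀ γ : ℝ,
      (1 - ((n : ℝ) - 1) / ((n : ℝ) - 1)) * (γ / Rs ^ 3) + g 1 1 -
        (∫ ρ in (0:ℝ)..Rs, ρ ^ n * v₁ ρ) / Rs ^ n = 0) := by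
  set w : ℝ → ℝ := fun r => gpstar r * ps' r + gcstar r * cs' r
  have hKMd : ∀ c, HasDerivAt KM (kB - kD) c := fun c => by
    subst hKM hKB hKD
    exact ((hasDerivAt_id c).const_mul kB).add (((hasDerivAt_id c).const_sub 1).const_mul kD)
      |>.congr_deriv (by ring)
  have hKDd : ∀ c, HasDerivAt KD (-kD) c := fun c => by
    subst hKD
    exact (((hasDerivAt_id c).const_sub 1).const_mul kD).congr_deriv (by ring)
  have hgstar_deriv : ∀ r ∈ Icc 0 Rs, HasDerivAt gstar (w r) r := fun r hr => by
    subst hgstar hg hgpstar hgcstar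
    exact ((hKMd _).mul_sub_comp (hKDd _) (hcs r hr) (hps r hr)).congr_deriv (by ring)
  have hv₁_eq : ∀ r ≠ 0, v₁ r = w r := fun r hr => by
    subst hv₁ hu₁
    simp only [w]
    field_simp
  have hw : ContinuousOn w (Icc 0 Rs) := by
    have hcsc := HasDerivAt.continuousOn hcs
    have hpsc := HasDerivAt.continuousOn hps
    have hKMc : Continuous KM := continuous_iff_continuousAt.2 fun c => (hKMd c).continuousAt
    subst hgpstar hgcstar
    fun_prop
  have hv₁_deriv : ∀ r ∈ Ioc 0 Rs, HasDerivAt gstar (v₁ r) r := fun r hr =>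
    (hv₁_eq r hr.1.ne').symm ▸ hgstar_deriv r (Ioc_subset_Icc_self hr)
  have hv₁_int : IntervalIntegrable (fun ρ => ρ ^ n * v₁ ρ) MeasureTheory.volume 0 Rs := by
    refine (((continuous_pow n).continuousOn.mul hw).intervalIntegrable_of_Icc hRs.le).congr_uIoo
      fun ρ hρ => ?_
    rw [uIoo_of_le hRs.le] at hρ
    simp only [Pi.mul_apply, hv₁_eq ρ hρ.1.ne']
  have hvs_ode : ∀ ρ ∈ Ioo 0 Rs, vs' ρ + ((n - 1 : ℝ) / ρ) * vs ρ = gstar ρ := fun ρ hρ => by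
    rw [hvsode ρ (Ioo_subset_Ioc_self hρ), hgstar]
  have hintegral : ∫ ρ in (0:ℝ)..Rs, ρ ^ n * v₁ ρ = Rs ^ n * g 1 1 := by
    rw [integral_pow_mul_deriv_of_radial_ode hn hRs.le (HasDerivAt.continuousOn hgstar_deriv)
      (HasDerivAt.continuousOn hvs) (fun ρ hρ => hv₁_deriv ρ (Ioo_subset_Ioc_self hρ))
      (fun ρ hρ => hvs ρ (Ioo_subset_Icc_self hρ)) hvs_ode hv₁_int]
    simp [hvsRs, hgstar, hcsRs, hpsRs]
  refine ⟨hv₁_deriv, fun γ => ?_⟩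
  have hn1 : (n : ℝ) - 1 ≠ 0 := by
    have : (2 : ℝ) ≤ n := mod_cast hn
    linarith
  rw [hintegral, div_self hn1, mul_div_cancel_left₀ _ (pow_ne_zero n hRs.ne')]
  ring

/-- The identity `α̃₁(γ) = 0` of (2.30): `v₁ = (g*)'` on `(0,R_s]`, and consequently
`(1 − λ₁/(n−1))·(γ/R_s³) + g(1,1) − R_s^{−n} ∫₀^{R_s} ρ^n v₁(ρ) dρ = 0` for every `γ`. -/
theorem stmt_18
    (n : ℕ) (hn : 2 ≤ n) (Rs : ℝ) (hRs : 0 < Rs)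
    (kB kD kP kQ : ℝ) (hkB : 0 < kB) (hkD : 0 < kD) (hkP : 0 < kP) (hkQ : 0 < kQ)
    (KB KD KM : ℝ → ℝ) (g : ℝ → ℝ → ℝ)
    (hKB : KB = fun c => kB * c) (hKD : KD = fun c => kD * (1 - c))
    (hKM : KM = fun c => KB c + KD c)
    (hg : g = fun c p => KM c * p - KD c)
    (cs cs' ps ps' vs vs' : ℝ → ℝ)
    (hcs : ∀ r ∈ Icc (0:ℝ) Rs, HasDerivAt cs (cs' r) r)
    (hcs'cont : ContinuousOn cs' (Icc 0 Rs))
    (hps : ∀ r ∈ Icc (0:ℝ) Rs, HasDerivAt ps (ps' r) r)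
    (hps'cont : ContinuousOn ps' (Icc 0 Rs))
    (hvs : ∀ r ∈ Icc (0:ℝ) Rs, HasDerivAt vs (vs' r) r)
    (hvs'cont : ContinuousOn vs' (Icc 0 Rs))
    (hcsRs : cs Rs = 1) (hpsRs : ps Rs = 1) (hcs'Rs : 0 < cs' Rs) (hvsRs : vs Rs = 0)
    (hvsode : ∀ r ∈ Ioc (0:ℝ) Rs, vs' r + ((n - 1 : ℝ) / r) * vs r = g (cs r) (ps r))
    (gstar gpstar gcstar u₁ v₁ : ℝ → ℝ)
    (hgstar : gstar = fun r => g (cs r) (ps r))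
    (hgpstar : gpstar = fun r => KM (cs r))
    (hgcstar : gcstar = fun r => (kB - kD) * ps r - (-kD))
    (hu₁ : u₁ = fun r => Rs * cs' r / (r * cs' Rs))
    (hv₁ : v₁ = fun r => gpstar r * ps' r + cs' Rs * Rs⁻¹ * gcstar r * r * u₁ r) :
    (∀ r ∈ Ioc (0:ℝ) Rs, HasDerivAt gstar (v₁ r) r) ∧
    (∀ γ : ℝ,
      (1 - ((n : ℝ) - 1) / ((n : ℝ) - 1)) * (γ / Rs ^ 3) + g 1 1 -
        (∫ ρ in (0:ℝ)..Rs, ρ ^ n * v₁ ρ) / Rs ^ n = 0) :=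
  stmt_18_general n hn Rs hRs kB kD KB KD KM g hKB hKD hKM hg cs cs' ps ps' vs vs' hcs hcs'cont hps
    hps'cont hvs hcsRs hpsRs hcs'Rs hvsRs hvsode gstar gpstar gcstar u₁ v₁ hgstar hgpstar hgcstar
    hu₁ hv₁
end

section
/- Set κ₀ = −max_{0≤r≤R_s} ( f_p*(r) + g*(r) + ∫₀^r g_p*(ρ)p_s'(ρ) dρ ); then κ₀ > 0, and κ₀ is independent of k. If ψ ∈ C¹([0,R_s]×[0,∞);ℝ) is nonnegative and satisfies ∂_t ψ(r,t) = (𝓛̂_k⁺ψ(·,t))(r) for 0 < r < R_s, t > 0, then (d/dt) J(ψ(·,t)) ≤ −κ₀ J(ψ(·,t)) for all t > 0, where J(φ) = ∫₀^{R_s} g_p*(r)p_s'(r)φ(r) dr. (Lemma 4.6, inequality (4.25).) -/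
/-!
Multiply `∂ₜψ = 𝓛̂ₖ⁺ψ` by the weight `w = g_p* p_s' ≥ 0` and integrate over `[0, R_s]`.
Since `(r/ρ)^(n+2k-2) ≤ 1` and `θ_k ≥ 0`, both nonlocal terms are dominated by the tail
`∫_r^{R_s} wψ`, and exchanging the order of integration turns `∫ w(r) ∫_r^{R_s} wψ` into
`∫ W wψ` with `W(r) = ∫_0^r w`. By the stationary relation the transport term carries the flux
`w v_s = g_p* f*`, which vanishes at both ends, so integrating by parts moves the derivative
onto `g_p* f*`. Its `c`-derivative cancels against the `-f_c* c_s'/p_s'` part of `a_k`, and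
the leftover terms `k v_s / r` and `(k_B - k_D) c_s' v_s p_s'` are `≤ 0`. What remains is
`∫ (f_p* + g* + W) wψ ≤ -κ₀ J(ψ)`.

For `κ₀ > 0`: `W(r) ≤ K_M(c_s(r)) (p_s(r) - p_s(0))` because `K_M ∘ c_s` is nondecreasing, so
the maximised function is at most `K_B - K_N - K_M p_s(0)` at `c = c_s(r)`. This is negative
because `K_M p_s(0) > K_M - K_N` at `c_s(0)` (`p_s(0)` is the positive root of `f(c_s(0), ·)`)
and `K_N / K_M` is nondecreasing in `c` when `k_B k_Q ≤ k_D k_P`.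
-/

open Set Real intervalIntegral Topology

lemma MonotoneOn.nonneg_of_hasDerivAt {g : ℝ → ℝ} {g' x : ℝ} {s : Set ℝ}
    (hg : MonotoneOn g s) (hs : s ∈ 𝓝 x) (hd : HasDerivAt g g' x) : 0 ≤ g' := by
  obtain ⟨U, hUs, hU, hxU⟩ := mem_nhds_iff.1 hs
  exact hd.hasDerivWithinAt.nonneg_of_monotoneOn
    (PerfectSpace.univ_preperfect.open_inter hU x ⟨hxU, trivial⟩)
    (hg.mono (inter_subset_left.trans hUs))

lemma integral_mul_deriv_le_of_monotoneOn {a b : ℝ} {M p p' : ℝ → ℝ} (hab : a ≤ b)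
    (hM : MonotoneOn M (Icc a b)) (hMc : ContinuousOn M (Icc a b))
    (hp : ∀ x ∈ Icc a b, HasDerivAt p (p' x) x) (hp'c : ContinuousOn p' (Icc a b))
    (hp'0 : ∀ x ∈ Ioo a b, 0 ≤ p' x) :
    ∫ x in a..b, M x * p' x ≤ M b * (p b - p a) := calc
  ∫ x in a..b, M x * p' x ≤ ∫ x in a..b, M b * p' x :=
    integral_mono_on_of_le_Ioo hab ((hMc.mul hp'c).intervalIntegrable_of_Icc hab)
      ((hp'c.const_smul (M b)).intervalIntegrable_of_Icc hab) fun x hx =>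
        mul_le_mul_of_nonneg_right (hM (Ioo_subset_Icc_self hx) (right_mem_Icc.2 hab) hx.2.le)
          (hp'0 x hx)
  _ = M b * (p b - p a) := by
    rw [integral_const_mul, integral_eq_sub_of_hasDerivAt (fun x hx => hp x (uIcc_of_le hab ▸ hx))
      (hp'c.intervalIntegrable_of_Icc hab)]

lemma ContinuousOn.hasDerivAt_integral_right {f : ℝ → ℝ} {a b x : ℝ}
    (hf : ContinuousOn f (Icc a b)) (hx : x ∈ Ioo a b) :
    HasDerivAt (fun u => ∫ t in a..u, f t) (f x) x :=
  integral_hasDerivAt_right ((hf.mono (uIcc_subset_Icc (left_mem_Icc.2 (hx.1.trans hx.2).le)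
      (Ioo_subset_Icc_self hx))).intervalIntegrable)
    ((hf.mono Ioo_subset_Icc_self).stronglyMeasurableAtFilter isOpen_Ioo x hx)
    (hf.continuousAt (Icc_mem_nhds hx.1 hx.2))

lemma ContinuousOn.hasDerivAt_integral_left {f : ℝ → ℝ} {a b x : ℝ}
    (hf : ContinuousOn f (Icc a b)) (hx : x ∈ Ioo a b) :
    HasDerivAt (fun u => ∫ t in u..b, f t) (-f x) x :=
  integral_hasDerivAt_left ((hf.mono (uIcc_subset_Icc (Ioo_subset_Icc_self hx)
      (right_mem_Icc.2 (hx.1.trans hx.2).le))).intervalIntegrable)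
    ((hf.mono Ioo_subset_Icc_self).stronglyMeasurableAtFilter isOpen_Ioo x hx)
    (hf.continuousAt (Icc_mem_nhds hx.1 hx.2))

lemma integral_mul_integral_tail_eq {a b : ℝ} {w h : ℝ → ℝ} (hab : a ≤ b)
    (hw : ContinuousOn w (Icc a b)) (hh : ContinuousOn h (Icc a b)) :
    ∫ r in a..b, w r * ∫ ρ in r..b, h ρ = ∫ r in a..b, (∫ ρ in a..r, w ρ) * h r := by
  have hW : ContinuousOn (fun r => ∫ ρ in a..r, w ρ) (Icc a b) := by
    simpa only [uIcc_of_le hab] using continuousOn_primitive_interval (a := a) (b := b)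
      (by simpa only [uIcc_of_le hab] using hw.integrableOn_Icc (μ := MeasureTheory.volume))
  have hB : ContinuousOn (fun r => ∫ ρ in r..b, h ρ) (Icc a b) := by
    simpa only [uIcc_of_le hab] using continuousOn_primitive_interval_left (a := a) (b := b)
      (by simpa only [uIcc_of_le hab] using hh.integrableOn_Icc (μ := MeasureTheory.volume))
  have hibp := integral_mul_deriv_eq_deriv_mul_of_hasDerivAt
    (uIcc_of_le hab ▸ hW) (uIcc_of_le hab ▸ hB)
    (fun x hx => hw.hasDerivAt_integral_right (by simpa [hab] using hx))
    (fun x hx => hh.hasDerivAt_integral_left (by simpa [hab] using hx))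
    (hw.intervalIntegrable_of_Icc hab) (hh.neg.intervalIntegrable_of_Icc hab)
  simp only [integral_same, mul_zero, zero_mul, sub_zero, mul_neg, integral_neg] at hibp
  linarith

lemma integral_pow_div_mul_le {r b : ℝ} {m : ℕ} {h : ℝ → ℝ} (hr : 0 < r) (hrb : r ≤ b)
    (hh : ContinuousOn h (Icc r b)) (hh0 : ∀ ρ ∈ Icc r b, 0 ≤ h ρ) :
    ∫ ρ in r..b, (r / ρ) ^ m * h ρ ≤ ∫ ρ in r..b, h ρ := by
  have hpow : ContinuousOn (fun ρ => (r / ρ) ^ m) (Icc r b) :=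
    (continuousOn_const.div continuousOn_id fun ρ hρ => (hr.trans_le hρ.1).ne').pow m
  refine integral_mono_on hrb ((hpow.mul hh).intervalIntegrable_of_Icc hrb)
    (hh.intervalIntegrable_of_Icc hrb) fun ρ hρ => ?_
  have hρ0 : 0 < ρ := hr.trans_le hρ.1
  exact mul_le_of_le_one_left (hh0 ρ hρ)
    (pow_le_one₀ (div_nonneg hr.le hρ0.le) ((div_le_one hρ0).2 hρ.1))

theorem integral_mul_transport_le {R κ θ : ℝ} {m : ℕ} {w v u' a φ φ' φt : ℝ → ℝ} (hR : 0 ≤ R)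
    (hw : ContinuousOn w (Icc 0 R)) (hw0 : ∀ r ∈ Ioc 0 R, 0 ≤ w r)
    (hv : ContinuousOn v (Icc 0 R)) (hv0 : v 0 = 0) (hvR : v R = 0)
    (hwv : ∀ r ∈ Ioo 0 R, HasDerivAt (fun x => w x * v x) (u' r) r)
    (hu' : ContinuousOn u' (Icc 0 R)) (ha : ContinuousOn a (Icc 0 R))
    (hφ : ContinuousOn φ (Icc 0 R)) (hφ' : ContinuousOn φ' (Icc 0 R))
    (hφt : ContinuousOn φt (Icc 0 R)) (hφd : ∀ r ∈ Ioo 0 R, HasDerivAt φ (φ' r) r)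
    (hφ0 : ∀ r ∈ Icc 0 R, 0 ≤ φ r) (hθ : 0 ≤ θ)
    (hφt_eq : ∀ r ∈ Ioo 0 R, φt r = -v r * φ' r + a r * φ r
      + θ * (∫ ρ in r..R, (r / ρ) ^ m * (w ρ * φ ρ)) + (1 - θ) * ∫ ρ in r..R, w ρ * φ ρ)
    (hpt : ∀ r ∈ Ioo 0 R, u' r + w r * a r + (∫ ρ in 0..r, w ρ) * w r ≤ -κ * w r) :
    ∫ r in 0..R, w r * φt r ≤ -κ * ∫ r in 0..R, w r * φ r := by
  have hi : ∀ {F : ℝ → ℝ}, ContinuousOn F (Icc 0 R) →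
      IntervalIntegrable F MeasureTheory.volume 0 R := fun hF => hF.intervalIntegrable_of_Icc hR
  have hwφ : ContinuousOn (fun r => w r * φ r) (Icc 0 R) := hw.mul hφ
  have hW : ContinuousOn (fun r => ∫ ρ in 0..r, w ρ) (Icc 0 R) := by
    simpa only [uIcc_of_le hR] using continuousOn_primitive_interval (a := 0) (b := R)
      (by simpa only [uIcc_of_le hR] using hw.integrableOn_Icc (μ := MeasureTheory.volume))
  have hB : ContinuousOn (fun r => ∫ ρ in r..R, w ρ * φ ρ) (Icc 0 R) := by
    simpa only [uIcc_of_le hR] using continuousOn_primitive_interval_left (a := 0) (b := R)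
      (by simpa only [uIcc_of_le hR] using hwφ.integrableOn_Icc (μ := MeasureTheory.volume))
  have hkernel : ∀ r ∈ Ioo 0 R, w r * φt r ≤
      -(w r * v r) * φ' r + w r * a r * φ r + w r * ∫ ρ in r..R, w ρ * φ ρ := by
    intro r hr
    have hK := integral_pow_div_mul_le (m := m) hr.1 hr.2.le
      (hwφ.mono (Icc_subset_Icc hr.1.le le_rfl))
      fun ρ hρ => mul_nonneg (hw0 ρ ⟨hr.1.trans_le hρ.1, hρ.2⟩) (hφ0 ρ ⟨hr.1.le.trans hρ.1, hρ.2⟩)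
    rw [hφt_eq r hr]
    nlinarith [mul_le_mul_of_nonneg_left hK (mul_nonneg (hw0 r (Ioo_subset_Ioc_self hr)) hθ)]
  have hibp : ∫ r in 0..R, -(w r * v r) * φ' r = ∫ r in 0..R, u' r * φ r := by
    have := integral_mul_deriv_eq_deriv_mul_of_hasDerivAt (uIcc_of_le hR ▸ hw.mul hv)
      (uIcc_of_le hR ▸ hφ) (fun x hx => hwv x (by simpa [hR] using hx))
      (fun x hx => hφd x (by simpa [hR] using hx)) (hi hu') (hi hφ')
    simp only [hv0, hvR, mul_zero, zero_mul, sub_zero, zero_sub] at this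
    simp only [neg_mul, intervalIntegral.integral_neg, this, neg_neg]
  calc ∫ r in 0..R, w r * φt r
      ≤ ∫ r in 0..R, (-(w r * v r) * φ' r + w r * a r * φ r
          + w r * ∫ ρ in r..R, w ρ * φ ρ) :=
        integral_mono_on_of_le_Ioo hR (hi (hw.mul hφt))
          (hi (by fun_prop)) hkernel
    _ = ∫ r in 0..R, (u' r * φ r + w r * a r * φ r + (∫ ρ in 0..r, w ρ) * (w r * φ r)) := by
        rw [integral_add, integral_add, hibp, integral_mul_integral_tail_eq hR hw hwφ,
          ← integral_add, ← integral_add]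
        all_goals exact hi (by fun_prop)
    _ ≤ ∫ r in 0..R, -κ * (w r * φ r) :=
        integral_mono_on_of_le_Ioo hR
          (hi (by fun_prop)) (hi (by fun_prop)) fun r hr => by
            nlinarith [mul_le_mul_of_nonneg_right (hpt r hr) (hφ0 r (Ioo_subset_Icc_self hr))]
    _ = -κ * ∫ r in 0..R, w r * φ r := integral_const_mul _ _

lemma hasDerivAt_integral_of_continuousOn_prod {a b t : ℝ} {F F' : ℝ → ℝ → ℝ} (hab : a ≤ b)
    (hF : ContinuousOn (fun q : ℝ × ℝ => F q.1 q.2) (Icc a b ×ˢ Ici 0))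
    (hF' : ContinuousOn (fun q : ℝ × ℝ => F' q.1 q.2) (Icc a b ×ˢ Ici 0))
    (hd : ∀ r ∈ Ioo a b, ∀ s ∈ Ioi (0 : ℝ), HasDerivAt (F r) (F' r s) s) (ht : 0 < t) :
    HasDerivAt (fun s => ∫ r in a..b, F r s) (∫ r in a..b, F' r t) t := by
  have hsub : Icc (t / 2) (2 * t) ⊆ Ici 0 := fun s hs => (by linarith [hs.1] : (0 : ℝ) ≤ s)
  obtain ⟨C, hC⟩ := (isCompact_Icc.prod isCompact_Icc).exists_bound_of_continuousOn
    (hF'.mono (prod_mono le_rfl hsub))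
  have hball : ∀ s ∈ Metric.ball t (t / 2), s ∈ Icc (t / 2) (2 * t) := fun s hs => by
    rw [Metric.mem_ball, Real.dist_eq, abs_lt] at hs
    constructor <;> linarith
  have hIoc : uIoc a b ⊆ Icc a b := uIoc_of_le hab ▸ Ioc_subset_Icc_self
  refine (hasDerivAt_integral_of_dominated_loc_of_deriv_le (μ := MeasureTheory.volume)
    (F := fun s r => F r s) (F' := fun s r => F' r s) (bound := fun _ => C)
    (Metric.ball_mem_nhds t (half_pos ht)) ?_ ?_ ?_ ?_ intervalIntegrable_const ?_).2
  · filter_upwards [Ioi_mem_nhds ht] with s hs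
    exact ((hF.uncurry_right s (le_of_lt hs)).mono hIoc).aestronglyMeasurable measurableSet_uIoc
  · exact (hF.uncurry_right t ht.le).intervalIntegrable_of_Icc hab
  · exact ((hF'.uncurry_right t ht.le).mono hIoc).aestronglyMeasurable measurableSet_uIoc
  · exact MeasureTheory.ae_of_all _ fun r hr s hs => hC (r, s) ⟨hIoc hr, hball s hs⟩
  · filter_upwards [MeasureTheory.measure_singleton (μ := MeasureTheory.volume) b |>
      MeasureTheory.compl_mem_ae_iff.2] with r hrb hr s hs
    rw [uIoc_of_le hab] at hr
    exact hd r ⟨hr.1, hr.2.lt_of_ne hrb⟩ s (mem_Ioi.2 (by linarith [(hball s hs).1]))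

lemma lt_mul_add_sqrt_div {b M P : ℝ} (hM : 0 < M) (hP : 0 < P) :
    b < M * ((b + √(b ^ 2 + 4 * M * P)) / (2 * M)) := by
  have hb : |b| < √(b ^ 2 + 4 * M * P) := by
    rw [← sqrt_sq_eq_abs]
    exact sqrt_lt_sqrt (sq_nonneg b) (by nlinarith)
  rw [mul_div_assoc', mul_comm 2 M, mul_div_mul_left _ _ hM.ne']
  linarith [le_abs_self b]

lemma div_add_two_mul_sub_one_nonneg (n k : ℕ) :
    0 ≤ (k : ℝ) / ((n : ℝ) + 2 * ((k : ℝ) - 1)) := by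
  rcases k.eq_zero_or_pos with rfl | hk
  · simp
  · have : (1 : ℝ) ≤ k := by exact_mod_cast hk
    positivity

lemma fp_add_g_add_integral_lt_zero {R kB kD kP kQ r : ℝ} {M N P D c p p' : ℝ → ℝ}
    (hM : ∀ x, M x = kB * x + kD * (1 - x)) (hN : ∀ x, N x = kP * x + kQ * (1 - x))
    (hP : ∀ x, P x = kP * x) (hD : ∀ x, D x = kD * (1 - x))
    (hkD : 0 < kD) (hkDB : kD < kB) (hkP : 0 < kP) (hk : kB * kQ ≤ kD * kP)
    (hc : ContinuousOn c (Icc 0 R)) (hc_mono : MonotoneOn c (Icc 0 R))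
    (hc_mem : ∀ x ∈ Icc 0 R, c x ∈ Ioc 0 1)
    (hp : ∀ x ∈ Icc 0 R, HasDerivAt p (p' x) x) (hp'c : ContinuousOn p' (Icc 0 R))
    (hp'0 : ∀ x ∈ Ioo 0 R, 0 ≤ p' x)
    (hp0 : p 0 = (M (c 0) - N (c 0) + √((M (c 0) - N (c 0)) ^ 2 + 4 * M (c 0) * P (c 0)))
      / (2 * M (c 0)))
    (hr : r ∈ Icc 0 R) :
    M (c r) - N (c r) - 2 * M (c r) * p r + (M (c r) * p r - D (c r))
      + ∫ ρ in 0..r, M (c ρ) * p' ρ < 0 := by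
  have hsub : Icc 0 r ⊆ Icc 0 R := Icc_subset_Icc le_rfl hr.2
  have h0 : (0 : ℝ) ∈ Icc 0 R := ⟨le_rfl, hr.1.trans hr.2⟩
  have hMc : MonotoneOn (fun x => M (c x)) (Icc 0 r) := fun x hx y hy hxy => by
    simp only [hM]
    nlinarith [hc_mono (hsub hx) (hsub hy) hxy]
  have hI := integral_mul_deriv_le_of_monotoneOn hr.1 hMc
    (by have := hc.mono hsub; simp only [hM]; fun_prop)
    (fun x hx => hp x (hsub hx)) (hp'c.mono hsub) (fun x hx => hp'0 x ⟨hx.1, hx.2.trans_le hr.2⟩)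
  obtain ⟨hc0, hc01⟩ := hc_mem 0 h0
  obtain ⟨hcr, hcr1⟩ := hc_mem r hr
  have hcc : c 0 ≤ c r := hc_mono h0 hr hr.1
  have hM0 : 0 < M (c 0) := by
    rw [hM]; nlinarith [mul_nonneg hkD.le (sub_nonneg.2 hc01)]
  have hM1 : 0 < M (c r) := by
    rw [hM]; nlinarith [mul_nonneg hkD.le (sub_nonneg.2 hcr1)]
  -- `N / M` is nondecreasing in `c` because `kB kQ ≤ kD kP`
  have hNM : M (c 0) * (kB * c r - N (c r)) ≤ M (c r) * (M (c 0) - N (c 0)) := by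
    simp only [hM, hN] at hM0 ⊢
    nlinarith [mul_nonneg (sub_nonneg.2 hcc) (sub_nonneg.2 hk),
      mul_nonneg (mul_nonneg hkD.le (sub_nonneg.2 hcr1)) hM0.le]
  have hroot : kB * c r - N (c r) < M (c r) * p 0 := by
    have hroot0 : M (c 0) - N (c 0) < M (c 0) * p 0 := by
      rw [hp0]; exact lt_mul_add_sqrt_div hM0 (by rw [hP]; exact mul_pos hkP hc0)
    exact lt_of_mul_lt_mul_left (by nlinarith [mul_lt_mul_of_pos_left hroot0 hM1]) hM0.le
  simp only [hM, hN, hD] at hI hroot ⊢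
  nlinarith

lemma hasDerivAt_rate_mul_reaction {kB kD kP kQ r c' p' : ℝ} {M N c p : ℝ → ℝ}
    (hM : ∀ x, M x = kB * x + kD * (1 - x)) (hN : ∀ x, N x = kP * x + kQ * (1 - x))
    (hc : HasDerivAt c c' r) (hp : HasDerivAt p p' r) :
    HasDerivAt (fun x => M (c x) * (kP * c x + (M (c x) - N (c x)) * p x - M (c x) * p x ^ 2))
      ((kB - kD) * c' * (kP * c r + (M (c r) - N (c r)) * p r - M (c r) * p r ^ 2)
        + M (c r) * ((kP + ((kB - kD) - (kP - kQ)) * p r - (kB - kD) * p r ^ 2) * c'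
          + (M (c r) - N (c r) - 2 * M (c r) * p r) * p')) r := by
  simp only [hM, hN]
  have hMc := (hc.const_mul kB).add ((hc.const_sub 1).const_mul kD)
  have hNc := (hc.const_mul kP).add ((hc.const_sub 1).const_mul kQ)
  refine (hMc.mul (((hc.const_mul kP).add ((hMc.sub hNc).mul hp)).sub
    (hMc.mul (hp.pow 2)))).congr_deriv ?_
  simp only [Pi.add_apply, Pi.sub_apply, Pi.mul_apply, Pi.pow_apply]
  push_cast
  ring

lemma flux_deriv_add_le {M M' F W κ c' p' v fc fp g k r : ℝ} (hM : 0 ≤ M) (hM' : 0 ≤ M')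
    (hv : v ≤ 0) (hp' : 0 < p') (hk : 0 ≤ k) (hr : 0 < r) (hF : v * p' = F)
    (hκ : fp + g + W ≤ -κ) :
    M' * F + M * (fc * c' + fp * p') + M * p' * (k / r * v + g - fc * c' / p') + W * (M * p')
      ≤ -κ * (M * p') := by
  have hkv : k / r * v ≤ 0 := mul_nonpos_of_nonneg_of_nonpos (div_nonneg hk hr.le) hv
  have hexp : M * p' * (k / r * v + g - fc * c' / p')
      = M * p' * (k / r * v) + M * p' * g - M * (fc * c') := by
    field_simp
  rw [hexp, ← hF]
  nlinarith [mul_nonpos_of_nonneg_of_nonpos (mul_nonneg hM hp'.le) hkv,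
    mul_nonpos_of_nonneg_of_nonpos hM' (mul_nonpos_of_nonpos_of_nonneg hv hp'.le),
    mul_le_mul_of_nonneg_right hκ (mul_nonneg hM hp'.le)]

theorem stmt_19_general
    (n : ℕ) (Rs : ℝ) (hRs : 0 < Rs)
    (kB kD kP kQ : ℝ)
    (h1 : kB > kD) (h2 : kD ≥ 2 * kQ) (h3 : 0 < kQ) (h5 : kB * kQ ≤ kD * kP)
    (KB KD KP KQ KM KN : ℝ → ℝ) (α : ℝ → ℝ) (f g : ℝ → ℝ → ℝ)
    (hKB : KB = fun c => kB * c) (hKD : KD = fun c => kD * (1 - c))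
    (hKP : KP = fun c => kP * c) (hKQ : KQ = fun c => kQ * (1 - c))
    (hKM : KM = fun c => KB c + KD c) (hKN : KN = fun c => KP c + KQ c)
    (hα : α = fun c =>
      (KM c - KN c + Real.sqrt ((KM c - KN c) ^ 2 + 4 * KM c * KP c)) / (2 * KM c))
    (hf : f = fun c p => KP c + (KM c - KN c) * p - KM c * p ^ 2)
    (hg : g = fun c p => KM c * p - KD c)
    -- the radial stationary solution
    (cs cs' ps ps' vs vs' : ℝ → ℝ)
    (hcs : ∀ r ∈ Icc (0:ℝ) Rs, HasDerivAt cs (cs' r) r)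
    (hcs'cont : ContinuousOn cs' (Icc 0 Rs))
    (hcsrange : ∀ r ∈ Icc (0:ℝ) Rs, cs r ∈ Ioc (0:ℝ) 1)
    (hcsmono : MonotoneOn cs (Icc 0 Rs))
    (hps : ∀ r ∈ Icc (0:ℝ) Rs, HasDerivAt ps (ps' r) r)
    (hps'cont : ContinuousOn ps' (Icc 0 Rs))
    (hps'pos : ∀ r ∈ Ioc (0:ℝ) Rs, 0 < ps' r)
    (hps0 : ps 0 = α (cs 0))
    (hvs : ∀ r ∈ Icc (0:ℝ) Rs, HasDerivAt vs (vs' r) r)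
    (hvs0 : vs 0 = 0) (hvsRs : vs Rs = 0)
    (hvsneg : ∀ r ∈ Ioo (0:ℝ) Rs, vs r < 0)
    (hstat1 : ∀ r ∈ Ioo (0:ℝ) Rs, vs r * ps' r = f (cs r) (ps r))
    -- the coefficients of the linearization
    (gstar fpstar fcstar gpstar : ℝ → ℝ)
    (hgstar : gstar = fun r => g (cs r) (ps r))
    (hfpstar : fpstar = fun r => KM (cs r) - KN (cs r) - 2 * KM (cs r) * ps r)
    (hfcstar : fcstar = fun r =>
      kP + ((kB - kD) - (kP - kQ)) * ps r - (kB - kD) * (ps r) ^ 2)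
    (hgpstar : gpstar = fun r => KM (cs r))
    -- the mode `k`, the number `θ_k` and the coefficient `a_k`
    (k : ℕ) (θk : ℝ) (hθk : θk = (k : ℝ) / ((n : ℝ) + 2 * ((k : ℝ) - 1)))
    (ak : ℝ → ℝ) (hakcont : ContinuousOn ak (Icc 0 Rs))
    (hak : ∀ r ∈ Ioc (0:ℝ) Rs,
      ak r = ((k : ℝ) / r) * vs r + gstar r - fcstar r * cs' r / ps' r)
    -- `κ₀`
    (κ₀ : ℝ)
    (hκ₀ : IsGreatest ((fun r => fpstar r + gstar r +
      ∫ ρ in (0:ℝ)..r, gpstar ρ * ps' ρ) '' Icc (0:ℝ) Rs) (-κ₀)) :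
    0 < κ₀ ∧
    ∀ ψ ψr ψt : ℝ → ℝ → ℝ,
      ContinuousOn (fun q : ℝ × ℝ => ψ q.1 q.2) (Icc 0 Rs ×ˢ Ici 0) →
      ContinuousOn (fun q : ℝ × ℝ => ψr q.1 q.2) (Icc 0 Rs ×ˢ Ici 0) →
      ContinuousOn (fun q : ℝ × ℝ => ψt q.1 q.2) (Icc 0 Rs ×ˢ Ici 0) →
      (∀ r ∈ Ioo (0:ℝ) Rs, ∀ t ∈ Ioi (0:ℝ), HasDerivAt (fun s => ψ s t) (ψr r t) r) →
      (∀ r ∈ Ioo (0:ℝ) Rs, ∀ t ∈ Ioi (0:ℝ), HasDerivAt (fun τ => ψ r τ) (ψt r t) t) →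
      (∀ r ∈ Icc (0:ℝ) Rs, ∀ t ∈ Ici (0:ℝ), 0 ≤ ψ r t) →
      (∀ r ∈ Ioo (0:ℝ) Rs, ∀ t ∈ Ioi (0:ℝ),
        ψt r t = -vs r * ψr r t + ak r * ψ r t
          + θk * (∫ ρ in r..Rs, (r / ρ) ^ (n + 2 * k - 2) * gpstar ρ * ps' ρ * ψ ρ t)
          + (1 - θk) * ∫ ρ in r..Rs, gpstar ρ * ps' ρ * ψ ρ t) →
      ∃ D : ℝ → ℝ, ∀ t ∈ Ioi (0:ℝ),
        HasDerivAt (fun τ => ∫ r in (0:ℝ)..Rs, gpstar r * ps' r * ψ r τ) (D t) t ∧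
        D t ≤ -κ₀ * ∫ r in (0:ℝ)..Rs, gpstar r * ps' r * ψ r t := by
  subst hKB hKD hKP hKQ hKM hKN hα hf hg hgstar hfpstar hfcstar hgpstar hθk
  beta_reduce at hκ₀ hak hstat1 hps0 ⊢
  have hkD : 0 < kD := by linarith
  have hkP : 0 < kP := pos_of_mul_pos_right ((mul_pos (by linarith) h3).trans_le h5) hkD.le
  have hcsC : ContinuousOn cs (Icc 0 Rs) := fun r hr => (hcs r hr).continuousAt.continuousWithinAt
  have hpsC : ContinuousOn ps (Icc 0 Rs) := fun r hr => (hps r hr).continuousAt.continuousWithinAt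
  have hvsC : ContinuousOn vs (Icc 0 Rs) := fun r hr => (hvs r hr).continuousAt.continuousWithinAt
  have hcs'0 : ∀ r ∈ Ioo 0 Rs, 0 ≤ cs' r := fun r hr =>
    hcsmono.nonneg_of_hasDerivAt (Icc_mem_nhds hr.1 hr.2) (hcs r (Ioo_subset_Icc_self hr))
  have hM : ∀ r ∈ Icc 0 Rs, 0 < kB * cs r + kD * (1 - cs r) := fun r hr => by
    nlinarith [(hcsrange r hr).1, mul_nonneg hkD.le (sub_nonneg.2 (hcsrange r hr).2)]
  obtain ⟨⟨r₀, hr₀, hκr₀⟩, hκ₀⟩ := hκ₀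
  have hκ₀neg : -κ₀ < 0 := hκr₀ ▸ fp_add_g_add_integral_lt_zero (fun _ => rfl) (fun _ => rfl)
    (fun _ => rfl) (fun _ => rfl) hkD h1 hkP h5 hcsC hcsmono hcsrange hps hps'cont
    (fun r hr => (hps'pos r (Ioo_subset_Ioc_self hr)).le) hps0 hr₀
  have hw : ContinuousOn (fun r => (kB * cs r + kD * (1 - cs r)) * ps' r) (Icc 0 Rs) := by
    fun_prop
  refine ⟨neg_neg_iff_pos.1 hκ₀neg, fun ψ ψr ψt hψ hψr hψt hψdr hψdt hψ0 hPDE =>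
    ⟨fun t => ∫ r in 0..Rs, (kB * cs r + kD * (1 - cs r)) * ps' r * ψt r t, fun t ht =>
      ⟨hasDerivAt_integral_of_continuousOn_prod hRs.le
        ((hw.comp continuousOn_fst fun q hq => hq.1).mul hψ)
        ((hw.comp continuousOn_fst fun q hq => hq.1).mul hψt)
        (fun r hr s hs => (hψdt r hr s hs).const_mul _) ht, ?_⟩⟩⟩
  have ht₀ : t ∈ Ici (0 : ℝ) := Ioi_subset_Ici_self ht
  refine integral_mul_transport_le hRs.le hw
    (fun r hr => mul_nonneg (hM r (Ioc_subset_Icc_self hr)).le (hps'pos r hr).le)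
    hvsC hvs0 hvsRs (fun r hr => (hasDerivAt_rate_mul_reaction (fun _ => rfl) (fun _ => rfl)
      (hcs r (Ioo_subset_Icc_self hr)) (hps r (Ioo_subset_Icc_self hr))).congr_of_eventuallyEq
      (Filter.eventually_of_mem (Ioo_mem_nhds hr.1 hr.2) fun x hx => by
        beta_reduce; rw [mul_assoc, mul_comm (ps' x), hstat1 x hx]))
    (by fun_prop) hakcont (hψ.uncurry_right t ht₀) (hψr.uncurry_right t ht₀)
    (hψt.uncurry_right t ht₀) (fun r hr => hψdr r hr t ht) (fun r hr => hψ0 r hr t ht₀)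
    (div_add_two_mul_sub_one_nonneg n k)
    (fun r hr => by simpa only [mul_assoc] using hPDE r hr t ht) fun r hr => ?_
  rw [hak r (Ioo_subset_Ioc_self hr)]
  exact flux_deriv_add_le (hM r (Ioo_subset_Icc_self hr)).le
    (mul_nonneg (sub_nonneg.2 h1.le) (hcs'0 r hr)) (hvsneg r hr).le
    (hps'pos r (Ioo_subset_Ioc_self hr)) (Nat.cast_nonneg k) hr.1 (hstat1 r hr)
    (hκ₀ ⟨r, Ioo_subset_Icc_self hr, rfl⟩)

/-- Lemma 4.6, inequality (4.25): with
`κ₀ = −max_{[0,R_s]} (f_p* + g* + ∫₀^r g_p* p_s')` one has `κ₀ > 0` (independently of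
`k`), and for any nonnegative `C¹` solution `ψ` of `∂_t ψ = 𝓛̂_k⁺ ψ`,
`(d/dt) J(ψ(·,t)) ≤ −κ₀ J(ψ(·,t))` for all `t > 0`, where
`J(φ) = ∫₀^{R_s} g_p*(r) p_s'(r) φ(r) dr`. -/
theorem stmt_19
    (n : ℕ) (hn : 2 ≤ n) (Rs : ℝ) (hRs : 0 < Rs)
    (kB kD kP kQ : ℝ)
    (h1 : kB > kD) (h2 : kD ≥ 2 * kQ) (h3 : 0 < kQ) (h4 : kB > kP) (h5 : kB * kQ ≤ kD * kP)
    (KB KD KP KQ KM KN : ℝ → ℝ) (α : ℝ → ℝ) (f g : ℝ → ℝ → ℝ)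
    (hKB : KB = fun c => kB * c) (hKD : KD = fun c => kD * (1 - c))
    (hKP : KP = fun c => kP * c) (hKQ : KQ = fun c => kQ * (1 - c))
    (hKM : KM = fun c => KB c + KD c) (hKN : KN = fun c => KP c + KQ c)
    (hα : α = fun c =>
      (KM c - KN c + Real.sqrt ((KM c - KN c) ^ 2 + 4 * KM c * KP c)) / (2 * KM c))
    (hf : f = fun c p => KP c + (KM c - KN c) * p - KM c * p ^ 2)
    (hg : g = fun c p => KM c * p - KD c)
    -- the radial stationary solution
    (cs cs' ps ps' vs vs' : ℝ → ℝ)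
    (hcs : ∀ r ∈ Icc (0:ℝ) Rs, HasDerivAt cs (cs' r) r)
    (hcs'cont : ContinuousOn cs' (Icc 0 Rs))
    (hcsrange : ∀ r ∈ Icc (0:ℝ) Rs, cs r ∈ Ioc (0:ℝ) 1)
    (hcsmono : MonotoneOn cs (Icc 0 Rs)) (hcsRs : cs Rs = 1)
    (hps : ∀ r ∈ Icc (0:ℝ) Rs, HasDerivAt ps (ps' r) r)
    (hps'cont : ContinuousOn ps' (Icc 0 Rs))
    (hpsrange : ∀ r ∈ Icc (0:ℝ) Rs, ps r ∈ Ioc (0:ℝ) 1)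
    (hps'pos : ∀ r ∈ Ioc (0:ℝ) Rs, 0 < ps' r) (hps'0 : 0 ≤ ps' 0)
    (hps0 : ps 0 = α (cs 0))
    (hvs : ∀ r ∈ Icc (0:ℝ) Rs, HasDerivAt vs (vs' r) r)
    (hvs'cont : ContinuousOn vs' (Icc 0 Rs))
    (hvs0 : vs 0 = 0) (hvsRs : vs Rs = 0)
    (hvsneg : ∀ r ∈ Ioo (0:ℝ) Rs, vs r < 0)
    (hstat1 : ∀ r ∈ Ioo (0:ℝ) Rs, vs r * ps' r = f (cs r) (ps r))
    (hstat2 : ∀ r ∈ Ioo (0:ℝ) Rs, vs' r + ((n - 1 : ℝ) / r) * vs r = g (cs r) (ps r))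
    -- the coefficients of the linearization
    (fstar gstar fpstar fcstar gpstar : ℝ → ℝ)
    (hfstar : fstar = fun r => f (cs r) (ps r))
    (hgstar : gstar = fun r => g (cs r) (ps r))
    (hfpstar : fpstar = fun r => KM (cs r) - KN (cs r) - 2 * KM (cs r) * ps r)
    (hfcstar : fcstar = fun r =>
      kP + ((kB - kD) - (kP - kQ)) * ps r - (kB - kD) * (ps r) ^ 2)
    (hgpstar : gpstar = fun r => KM (cs r))
    -- the mode `k`, the number `θ_k` and the coefficient `a_k`
    (k : ℕ) (θk : ℝ) (hθk : θk = (k : ℝ) / ((n : ℝ) + 2 * ((k : ℝ) - 1)))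
    (ak : ℝ → ℝ) (hakcont : ContinuousOn ak (Icc 0 Rs))
    (hak : ∀ r ∈ Ioc (0:ℝ) Rs,
      ak r = ((k : ℝ) / r) * vs r + gstar r - fcstar r * cs' r / ps' r)
    -- `κ₀`
    (κ₀ : ℝ)
    (hκ₀ : IsGreatest ((fun r => fpstar r + gstar r +
      ∫ ρ in (0:ℝ)..r, gpstar ρ * ps' ρ) '' Icc (0:ℝ) Rs) (-κ₀)) :
    0 < κ₀ ∧
    ∀ ψ ψr ψt : ℝ → ℝ → ℝ,
      ContinuousOn (fun q : ℝ × ℝ => ψ q.1 q.2) (Icc 0 Rs ×ˢ Ici 0) →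
      ContinuousOn (fun q : ℝ × ℝ => ψr q.1 q.2) (Icc 0 Rs ×ˢ Ici 0) →
      ContinuousOn (fun q : ℝ × ℝ => ψt q.1 q.2) (Icc 0 Rs ×ˢ Ici 0) →
      (∀ r ∈ Ioo (0:ℝ) Rs, ∀ t ∈ Ioi (0:ℝ), HasDerivAt (fun s => ψ s t) (ψr r t) r) →
      (∀ r ∈ Ioo (0:ℝ) Rs, ∀ t ∈ Ioi (0:ℝ), HasDerivAt (fun τ => ψ r τ) (ψt r t) t) →
      (∀ r ∈ Icc (0:ℝ) Rs, ∀ t ∈ Ici (0:ℝ), 0 ≤ ψ r t) →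
      (∀ r ∈ Ioo (0:ℝ) Rs, ∀ t ∈ Ioi (0:ℝ),
        ψt r t = -vs r * ψr r t + ak r * ψ r t
          + θk * (∫ ρ in r..Rs, (r / ρ) ^ (n + 2 * k - 2) * gpstar ρ * ps' ρ * ψ ρ t)
          + (1 - θk) * ∫ ρ in r..Rs, gpstar ρ * ps' ρ * ψ ρ t) →
      ∃ D : ℝ → ℝ, ∀ t ∈ Ioi (0:ℝ),
        HasDerivAt (fun τ => ∫ r in (0:ℝ)..Rs, gpstar r * ps' r * ψ r τ) (D t) t ∧
        D t ≤ -κ₀ * ∫ r in (0:ℝ)..Rs, gpstar r * ps' r * ψ r t :=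
  stmt_19_general n Rs hRs kB kD kP kQ h1 h2 h3 h5 KB KD KP KQ KM KN α f g hKB hKD hKP hKQ hKM hKN
    hα hf hg cs cs' ps ps' vs vs' hcs hcs'cont hcsrange hcsmono hps hps'cont hps'pos hps0 hvs hvs0
    hvsRs hvsneg hstat1 gstar fpstar fcstar gpstar hgstar hfpstar hfcstar hgpstar k θk hθk ak
    hakcont hak κ₀ hκ₀
end
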